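/- arXiv:2305.12440 — 3 statements merged into one kernel-verified Lean document; each statement's English description precedes it below -/
import Mathlib

section
/- Let n ≥ 1, and for a ∈ ℤ_n let ā ∈ {0,…,n−1} denote its canonical representative. Define ω : ℤ_n × ℤ_n → ℤ₂ by ω(a,b) = 0 if ā + b̄ < n and ω(a,b) = 1 otherwise, and define α : ℤ_n × ℤ_n × ℤ_n → ℂ* by α(a,b,c) = exp((πi/n)·ω(a,b)·c̄), where ω(a,b) is viewed as the integer 0 or 1. Then (α, ω) is a ℂ*-valued super 3-cocycle on ℤ_n, i.e. α(a,b,c)·α(a,b+c,d)·α(b,c,d) = (−1)^{ω(a,b)·ω(c,d)}·α(a+b,c,d)·α(a,b,c+d) for all a,b,c,d ∈ ℤ_n, where in the exponent ω-values are lifted to integers 0 or 1. -/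
/-- The `ℤ₂`-valued 2-cocycle on `ℤ_n` given by `ω(a,b) = 0` if `ā + b̄ < n`
and `ω(a,b) = 1` otherwise, where `ā` is the canonical representative. -/
def omegaZ (n : ℕ) (a b : ZMod n) : ZMod 2 :=
  if a.val + b.val < n then 0 else 1

/-- The 3-cochain `α(a,b,c) = exp((πi/n)·ω(a,b)·c̄)`, with `ω(a,b)` lifted
to the integer `0` or `1`. Its values lie in `ℂ* = ℂ \ {0}` since `exp` never vanishes. -/
noncomputable def alphaZ (n : ℕ) (a b c : ZMod n) : ℂ :=
  Complex.exp ((Real.pi * Complex.I / n) * ((omegaZ n a b).val : ℂ) * (c.val : ℂ))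

/-!
`ω(a, b)` is the carry of the addition `ā + b̄`, i.e. `ā + b̄ = (a + b)‾ + n·ω(a, b)`, and
comparing this for `(a + b) + c` and `a + (b + c)` shows that the lifted carry is an honest
`ℕ`-valued 2-cocycle. With `ζ = exp(πi/n)` we have `α(a, b, c) = ζ ^ (ω(a, b)·c̄)` and `-1 = ζ ^ n`,
so the super 3-cocycle equation reduces to an identity between natural exponents. It is the
carry relation for `c + d` times `ω(a, b)` plus the cocycle identity for `(a, b, c)` times `d̄`.
-/

open Complex

section

variable {n : ℕ} [NeZero n]

lemma val_add_add_mul_omegaZ_val (a b : ZMod n) :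
    (a + b).val + n * (omegaZ n a b).val = a.val + b.val := by
  have ha := a.val_lt
  have hb := b.val_lt
  rw [ZMod.val_add, omegaZ]
  split_ifs with h
  · simp [Nat.mod_eq_of_lt h]
  · rw [Nat.mod_eq_sub_mod (not_lt.1 h), Nat.mod_eq_of_lt (by omega), ZMod.val_one]
    omega

lemma omegaZ_val_add_omegaZ_val (a b c : ZMod n) :
    (omegaZ n a b).val + (omegaZ n (a + b) c).val =
      (omegaZ n b c).val + (omegaZ n a (b + c)).val := by
  have hab := val_add_add_mul_omegaZ_val a b
  have hab_c := val_add_add_mul_omegaZ_val (a + b) c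
  have hbc := val_add_add_mul_omegaZ_val b c
  have ha_bc := val_add_add_mul_omegaZ_val a (b + c)
  rw [add_assoc] at hab_c
  refine Nat.eq_of_mul_eq_mul_left (NeZero.pos n) ?_
  linarith

lemma exp_pi_mul_I_div_pow_self : exp (Real.pi * I / n) ^ n = -1 := by
  rw [← exp_nat_mul, mul_div_cancel₀ _ (Nat.cast_ne_zero.2 (NeZero.ne n)), exp_pi_mul_I]

end

lemma alphaZ_eq_pow (n : ℕ) (a b c : ZMod n) :
    alphaZ n a b c = exp (Real.pi * I / n) ^ ((omegaZ n a b).val * c.val) := by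
  rw [alphaZ, ← exp_nat_mul]
  push_cast
  ring_nf

/-- `(alphaZ n, omegaZ n)` is a `ℂ*`-valued super 3-cocycle on `ℤ_n`: the
super 3-cocycle equation holds for all `a, b, c, d ∈ ℤ_n`. -/
theorem alphaZ_omegaZ_is_super_three_cocycle (n : ℕ) (hn : 1 ≤ n)
    (a b c d : ZMod n) :
    alphaZ n a b c * alphaZ n a (b + c) d * alphaZ n b c d =
      (-1 : ℂ) ^ ((omegaZ n a b).val * (omegaZ n c d).val) *
        (alphaZ n (a + b) c d * alphaZ n a b (c + d)) := by
  have : NeZero n := ⟨by omega⟩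
  simp only [alphaZ_eq_pow]
  rw [← exp_pi_mul_I_div_pow_self (n := n), ← pow_mul, ← pow_add, ← pow_add, ← pow_add, ← pow_add]
  congr 1
  linear_combination (omegaZ n a b).val * (val_add_add_mul_omegaZ_val c d).symm +
    d.val * (omegaZ_val_add_omegaZ_val a b c).symm
end

section
/- Let G be a group, K a field, and (α, ω) a K*-valued super 3-cocycle on G, with 1 denoting the identity element of G. Then for every g ∈ G, α(1,g,1)·α(1,1,g)·α(g,1,1) = (−1)^{ω(g,g⁻¹)·ω(1,1) + ω(g,1)·ω(1,1)} · α(1,g,1)⁻¹ · α(1,g,g⁻¹)⁻¹ · α(g,1,1), where ω-values are lifted to the integers 0 or 1 in the exponent. -/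
/-!
Specialising the super pentagon identity to quadruples with three entries equal to `1` shows
that `α(1,1,1)` and `α(1,g,1)` are signs, and the quadruple `(1,1,g,g⁻¹)` expresses `α(1,1,g)`
through `α(1,g,g⁻¹)⁻¹` and `α(1,1,1)`. Substituting these and using that a sign is its own
inverse gives the identity.
-/

namespace SuperCocycle

variable {G : Type*} [Group G] {M : Type*} [CommGroup M] [HasDistribNeg M]
  {α : G → G → G → M} {ω : G → G → ZMod 2}

lemma neg_one_pow_inv (n : ℕ) : ((-1 : M) ^ n)⁻¹ = (-1) ^ n := by
  rw [← inv_pow, inv_neg_one]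

section

variable (hα : ∀ g h k l : G,
  α g h k * α g (h * k) l * α h k l =
    (-1 : M) ^ ((ω g h).val * (ω k l).val) * (α (g * h) k l * α g h (k * l)))
include hα

lemma apply_one_one_one (g : G) : α 1 1 1 = (-1 : M) ^ ((ω g 1).val * (ω 1 1).val) := by
  have h := hα g 1 1 1
  simp only [mul_one] at h
  exact mul_left_cancel (h.trans (mul_comm _ _))

lemma apply_one_left_one (g : G) : α 1 g 1 = (-1 : M) ^ ((ω 1 g).val * (ω 1 1).val) := by
  have h := hα 1 g 1 1
  simp only [one_mul, mul_one] at h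
  rw [mul_assoc, mul_comm (α 1 g 1) (α g 1 1)] at h
  exact mul_right_cancel h

lemma apply_one_one_left_mul_apply_one (g h : G) :
    α 1 1 g * α 1 g h = (-1 : M) ^ ((ω 1 1).val * (ω g h).val) * α 1 1 (g * h) := by
  have e := hα 1 1 g h
  simp only [one_mul] at e
  rw [mul_comm (α 1 g h) (α 1 1 (g * h)), ← mul_assoc] at e
  exact mul_right_cancel e

end

end SuperCocycle

open SuperCocycle in
theorem spin_CP_move_identity_general {G : Type*} [Group G] {K : Type*} [Field K]
    (α : G → G → G → Kˣ) (ω : G → G → ZMod 2)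
    (hα : ∀ g h k l : G,
      α g h k * α g (h * k) l * α h k l =
        (-1 : Kˣ) ^ ((ω g h).val * (ω k l).val) * (α (g * h) k l * α g h (k * l)))
    (g : G) :
    α 1 g 1 * α 1 1 g * α g 1 1 =
      (-1 : Kˣ) ^ ((ω g g⁻¹).val * (ω 1 1).val + (ω g 1).val * (ω 1 1).val) *
        ((α 1 g 1)⁻¹ * (α 1 g g⁻¹)⁻¹ * α g 1 1) := by
  have hsign : (α 1 g 1)⁻¹ = α 1 g 1 := by
    rw [apply_one_left_one hα g, neg_one_pow_inv]
  have hleft : α 1 1 g =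
      (-1 : Kˣ) ^ ((ω g g⁻¹).val * (ω 1 1).val + (ω g 1).val * (ω 1 1).val) *
        (α 1 g g⁻¹)⁻¹ := by
    rw [eq_mul_inv_iff_mul_eq, apply_one_one_left_mul_apply_one hα, mul_inv_cancel,
      apply_one_one_one hα g, ← pow_add, Nat.mul_comm (ω 1 1).val]
  rw [hsign, hleft]
  ac_rfl

/-- The spin CP-move identity: for a `K*`-valued super 3-cocycle `(α, ω)` on a group `G`,
`α(1,g,1)·α(1,1,g)·α(g,1,1)
  = (−1)^{ω(g,g⁻¹)·ω(1,1) + ω(g,1)·ω(1,1)} · α(1,g,1)⁻¹ · α(1,g,g⁻¹)⁻¹ · α(g,1,1)`. -/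
theorem spin_CP_move_identity {G : Type*} [Group G] {K : Type*} [Field K]
    (α : G → G → G → Kˣ) (ω : G → G → ZMod 2)
    (hω : ∀ g h k : G, ω g h + ω (g * h) k = ω h k + ω g (h * k))
    (hα : ∀ g h k l : G,
      α g h k * α g (h * k) l * α h k l =
        (-1 : Kˣ) ^ ((ω g h).val * (ω k l).val) * (α (g * h) k l * α g h (k * l)))
    (g : G) :
    α 1 g 1 * α 1 1 g * α g 1 1 =
      (-1 : Kˣ) ^ ((ω g g⁻¹).val * (ω 1 1).val + (ω g 1).val * (ω 1 1).val) *
        ((α 1 g 1)⁻¹ * (α 1 g g⁻¹)⁻¹ * α g 1 1) :=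
  spin_CP_move_identity_general α ω hα g
end

section
/- Let ω : ℤ₂ × ℤ₂ → ℤ₂ be defined on canonical representatives ā, b̄ ∈ {0,1} by ω(a,b) = 0 if ā + b̄ < 2 and ω(a,b) = 1 otherwise, and let α : ℤ₂ × ℤ₂ × ℤ₂ → ℂ* be α(a,b,c) = exp((πi/2)·ω(a,b)·c̄), with ω-values lifted to the integers 0 or 1. Then ∑_{g ∈ ℤ₂} (−1)^{ω(g,g) + ω(g,0)} · α(g,0,g) · α(g,g,g) = 1 − i, where 0 is the identity of ℤ₂ and i is the imaginary unit in ℂ. -/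
/-! Since `ω(g,g) = g`, `ω(g,0) = 0` and `α(a,b,c) = i ^ (ω(a,b)·c̄)`, the term at `g` is
`(-1)^ḡ · i^ḡ = (-i)^ḡ`, so the sum is `1 + (-i)`. -/

/-- The `ℤ₂`-valued 2-cocycle on `ℤ₂` given by `ω(a,b) = 0` if `ā + b̄ < 2`
and `ω(a,b) = 1` otherwise, where `ā ∈ {0,1}` is the canonical representative. -/
def omega2 (a b : ZMod 2) : ZMod 2 :=
  if a.val + b.val < 2 then 0 else 1

/-- The 3-cochain `α(a,b,c) = exp((πi/2)·ω(a,b)·c̄)`, with `ω(a,b)` lifted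
to the integer `0` or `1`. -/
noncomputable def alpha2 (a b c : ZMod 2) : ℂ :=
  Complex.exp ((Real.pi * Complex.I / 2) * ((omega2 a b).val : ℂ) * (c.val : ℂ))

lemma omega2_self (a : ZMod 2) : omega2 a a = a := by
  revert a
  decide

lemma omega2_zero_right (a : ZMod 2) : omega2 a 0 = 0 := by
  revert a
  decide

lemma alpha2_eq_I_pow (a b c : ZMod 2) :
    alpha2 a b c = Complex.I ^ ((omega2 a b).val * c.val) := by
  rw [← Complex.exp_pi_div_two_mul_I, ← Complex.exp_nat_mul, alpha2]
  push_cast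
  ring_nf

lemma Z_L21_s1_summand_eq (g : ZMod 2) :
    (-1 : ℂ) ^ ((omega2 g g).val + (omega2 g 0).val) * (alpha2 g 0 g * alpha2 g g g) =
      (-Complex.I) ^ g.val := by
  simp only [alpha2_eq_I_pow, omega2_self, omega2_zero_right]
  obtain hg | hg : g.val = 0 ∨ g.val = 1 := by have := ZMod.val_lt g; omega
  all_goals simp [hg]

/-- The state-sum invariant of the lens space `L(2,1)` with its first spin
structure `s₁` equals `1 − i`. -/
theorem Z_L21_s1 :
    ∑ g : ZMod 2,
      (-1 : ℂ) ^ ((omega2 g g).val + (omega2 g 0).val) * (alpha2 g 0 g * alpha2 g g g) =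
      1 - Complex.I := by
  simp only [Z_L21_s1_summand_eq]
  -- `ZMod 2` is definitionally `Fin 2`
  exact (Fin.sum_univ_two _).trans (by simp [ZMod.val, sub_eq_add_neg])
end
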